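/- arXiv:1503.02993 — 4 statements merged into one kernel-verified Lean document; each statement's English description precedes it below -/
import Mathlib

section
/- For every natural number n ≥ 1, the map sending a tuple (w₂, w₃, …, wₙ), where each wₖ is a (k−1,1)-shuffle in the permutations of Fin k, to the permutation Eₙ(wₙ) ∘ Eₙ₋₁(wₙ₋₁) ∘ ⋯ ∘ E₂(w₂) of Fin n, is a bijection from the product of the sets of (k−1,1)-shuffles (for k = 2, …, n) onto the full symmetric group of permutations of Fin n. (For n = 1 the empty tuple is sent to the identity permutation.) -/
/-- A `(p,q)`-shuffle: a permutation of `Fin (p+q)` that is strictly increasing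
on the first `p` positions and strictly increasing on the last `q` positions. -/
def IsShuffle (p q : ℕ) (w : Equiv.Perm (Fin (p + q))) : Prop :=
  (∀ i j : Fin (p + q), (i : ℕ) < j → (j : ℕ) < p → w i < w j) ∧
  (∀ i j : Fin (p + q), p ≤ (i : ℕ) → (i : ℕ) < j → w i < w j)

/-- `Eₖ(w)`: the permutation of `Fin n` acting as `w` on the first `k` positions and as the
identity on the remaining `n - k` positions, obtained by conjugating
`Equiv.sumCongr w (Equiv.refl (Fin (n-k)))` by the canonical equivalence
`Fin k ⊕ Fin (n-k) ≃ Fin n`. -/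
def extendPerm (n k : ℕ) (h : k ≤ n) (w : Equiv.Perm (Fin k)) : Equiv.Perm (Fin n) :=
  (finSumFinEquiv.trans (finCongr (Nat.add_sub_cancel' h))).permCongr
    (w.sumCongr (Equiv.refl (Fin (n - k))))

/-! A `(p,1)`-shuffle is determined by the image `j` of the last point, being the increasing
bijection of the other points onto `{j}ᶜ`; so there are exactly `p + 1` of them. Every
`τ ∈ S_{p+1}` factors uniquely as `w * E(σ)` with `w` a `(p,1)`-shuffle and `σ ∈ S_p`: uniqueness
is read off at the last point, which `E(σ)` fixes, and existence follows by counting,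
`(p + 1) * p! = (p + 1)!`. Peeling the factor `Eₙ(wₙ)` off the product and inducting on `n` gives
the bijection. -/

open Equiv

lemma Function.bijective_of_unique_of_subsingleton {α β : Type*} [Unique α] [Subsingleton β]
    (f : α → β) : Function.Bijective f :=
  ⟨Function.injective_of_subsingleton f, fun _ => ⟨default, Subsingleton.elim _ _⟩⟩

section ExtendPerm

variable {n k : ℕ} (h : k ≤ n)

lemma extendPerm_apply_of_lt (w : Perm (Fin k)) (i : Fin n) (hi : (i : ℕ) < k) :
    extendPerm n k h w i = Fin.castLE h (w ⟨i, hi⟩) := by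
  have hcast : Fin.cast (Nat.add_sub_cancel' h).symm i = Fin.castAdd (n - k) ⟨i, hi⟩ := rfl
  simp only [extendPerm, permCongr_apply, trans_apply, symm_trans_apply, finCongr_symm,
    finCongr_apply, hcast, finSumFinEquiv_symm_apply_castAdd, sumCongr_apply, Sum.map_inl,
    finSumFinEquiv_apply_left]
  rfl

lemma extendPerm_apply_of_le (w : Perm (Fin k)) (i : Fin n) (hi : k ≤ (i : ℕ)) :
    extendPerm n k h w i = i := by
  have hcast : Fin.cast (Nat.add_sub_cancel' h).symm i = Fin.natAdd k ⟨i - k, by omega⟩ :=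
    Fin.ext (by simp; omega)
  simp only [extendPerm, permCongr_apply, trans_apply, symm_trans_apply, finCongr_symm,
    finCongr_apply, hcast, finSumFinEquiv_symm_apply_natAdd, sumCongr_apply, Sum.map_inr,
    refl_apply, finSumFinEquiv_apply_right]
  ext; simp; omega

def extendPermHom : Perm (Fin k) →* Perm (Fin n) :=
  (finSumFinEquiv.trans (finCongr (Nat.add_sub_cancel' h))).permCongrHom.toMonoidHom.comp
    ((Perm.sumCongrHom _ _).comp (MonoidHom.inl _ _))

lemma extendPermHom_apply (w : Perm (Fin k)) : extendPermHom h w = extendPerm n k h w := rfl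

lemma extendPerm_injective : Function.Injective (extendPerm n k h) :=
  (permCongr _).injective.comp (Perm.sumCongrHom_injective.comp (Prod.mk_left_injective 1))

lemma extendPerm_self (w : Perm (Fin n)) : extendPerm n n le_rfl w = w := by
  ext i
  rw [extendPerm_apply_of_lt _ _ _ i.isLt]
  rfl

lemma extendPerm_extendPerm {m : ℕ} (hm : m ≤ n) (hk : k ≤ m) (w : Perm (Fin k)) :
    extendPerm n m hm (extendPerm m k hk w) = extendPerm n k (hk.trans hm) w := by
  ext i
  rcases lt_or_ge (i : ℕ) k with hik | hki
  · rw [extendPerm_apply_of_lt _ _ _ (hik.trans_le hk), extendPerm_apply_of_lt _ _ _ hik,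
      extendPerm_apply_of_lt _ _ _ (by exact hik)]
    rfl
  rcases lt_or_ge (i : ℕ) m with him | hmi
  · rw [extendPerm_apply_of_lt _ _ _ him, extendPerm_apply_of_le _ _ _ hki,
      extendPerm_apply_of_le _ _ _ (by exact hki)]
    rfl
  · rw [extendPerm_apply_of_le _ _ _ hmi, extendPerm_apply_of_le _ _ _ hki]

end ExtendPerm

abbrev Shuffle (p q : ℕ) : Type := {w : Perm (Fin (p + q)) // IsShuffle p q w}

section Shuffle

variable {p : ℕ}

def insertShuffle (j : Fin (p + 1)) : Perm (Fin (p + 1)) :=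
  (finSuccEquiv' (Fin.last p)).trans (finSuccEquiv' j).symm

@[simp]
lemma insertShuffle_last (j : Fin (p + 1)) : insertShuffle j (Fin.last p) = j := by
  simp [insertShuffle, finSuccEquiv'_at, finSuccEquiv'_symm_none]

@[simp]
lemma insertShuffle_castSucc (j : Fin (p + 1)) (i : Fin p) :
    insertShuffle j i.castSucc = j.succAbove i := by
  rw [insertShuffle, trans_apply, ← Fin.succAbove_last, finSuccEquiv'_succAbove,
    finSuccEquiv'_symm_some]

lemma isShuffle_insertShuffle (j : Fin (p + 1)) : IsShuffle p 1 (insertShuffle j) := by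
  refine ⟨fun a b hab hb => ?_, fun a b ha hab => by omega⟩
  show insertShuffle j (Fin.castSucc ⟨a, hab.trans hb⟩) < insertShuffle j (Fin.castSucc ⟨b, hb⟩)
  rw [insertShuffle_castSucc, insertShuffle_castSucc]
  exact Fin.strictMono_succAbove j hab

lemma IsShuffle.eq_insertShuffle {w : Perm (Fin (p + 1))} (hw : IsShuffle p 1 w) :
    w = insertShuffle (w (Fin.last p)) := by
  have hmono : StrictMono (w ∘ Fin.castSucc) := fun a b hab => hw.1 _ _ hab b.isLt
  have hrange : Set.range (w ∘ Fin.castSucc) = {w (Fin.last p)}ᶜ := by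
    rw [Set.range_comp, ← Fin.succAbove_last, Fin.range_succAbove, Set.image_compl_eq w.bijective,
      Set.image_singleton]
  have hrestrict := (hmono.range_inj (Fin.strictMono_succAbove _)).1
    (by rw [hrange, Fin.range_succAbove])
  ext x
  induction x using Fin.lastCases with
  | last => simp
  | cast i => simp [← hrestrict]

end Shuffle

def shuffleEquivFin (p : ℕ) : Shuffle p 1 ≃ Fin (p + 1) where
  toFun w := w.1 (Fin.last p)
  invFun j := ⟨insertShuffle j, isShuffle_insertShuffle j⟩
  left_inv w := Subtype.ext w.2.eq_insertShuffle.symm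
  right_inv := insertShuffle_last

lemma bijective_shuffle_mul_extendPerm (p : ℕ) :
    Function.Bijective fun x : Shuffle p 1 × Perm (Fin p) =>
      x.1.1 * extendPerm (p + 1) p p.le_succ x.2 := by
  refine (Nat.bijective_iff_injective_and_card _).2 ⟨?_, ?_⟩
  · rintro ⟨w, σ⟩ ⟨w', σ'⟩ h
    have hlast : w.1 (Fin.last p) = w'.1 (Fin.last p) := by
      simpa [extendPerm_apply_of_le] using congr($h (Fin.last p))
    obtain rfl : w = w' := (shuffleEquivFin p).injective hlast
    simpa using extendPerm_injective _ (mul_left_cancel h)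
  · rw [Nat.card_prod, Nat.card_congr (shuffleEquivFin p), Nat.card_perm, Nat.card_perm]
    simp [Nat.factorial_succ]

def extendedProd (m : ℕ) (ws : ∀ i : Fin m, Shuffle (i.1 + 1) 1) : Perm (Fin (m + 1)) :=
  (List.ofFn fun i : Fin m => extendPerm (m + 1) (i.1 + 2) (by omega) (ws i).1).reverse.prod

lemma extendedProd_snoc (m : ℕ) (w : Shuffle (m + 1) 1) (ws : ∀ i : Fin m, Shuffle (i.1 + 1) 1) :
    extendedProd (m + 1) (Fin.snocEquiv (fun i => Shuffle (i.1 + 1) 1) (w, ws)) =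
      w.1 * extendPerm (m + 2) (m + 1) (by omega) (extendedProd m ws) := by
  rw [extendedProd, List.ofFn_succ', List.concat_eq_append, List.reverse_append,
    List.reverse_singleton, List.singleton_append, List.prod_cons]
  congr 1
  · simpa using extendPerm_self w.1
  · rw [extendedProd, ← extendPermHom_apply, map_list_prod, List.map_reverse, List.map_ofFn]
    congr 3
    funext i
    simpa [extendPermHom_apply] using (extendPerm_extendPerm _ _ _).symm

lemma bijective_extendedProd (m : ℕ) : Function.Bijective (extendedProd m) := by
  induction m with
  | zero =>
    have : Subsingleton (Perm (Fin (0 + 1))) := inferInstanceAs (Subsingleton (Perm (Fin 1)))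
    exact Function.bijective_of_unique_of_subsingleton _
  | succ m ih =>
    have hsnoc : extendedProd (m + 1) ∘ Fin.snocEquiv _ =
        (fun x : Shuffle (m + 1) 1 × Perm (Fin (m + 1)) =>
          x.1.1 * extendPerm (m + 2) (m + 1) (by omega) x.2) ∘ Prod.map id (extendedProd m) := by
      funext ⟨w, ws⟩
      exact extendedProd_snoc m w ws
    rw [← (Fin.snocEquiv _).bijective_comp, hsnoc]
    exact (bijective_shuffle_mul_extendPerm (m + 1)).comp (Function.bijective_id.prodMap ih)

/-- The map sending a tuple `(w₂, …, wₙ)` of shuffles, where `wₖ` is a `(k-1,1)`-shuffle in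
`S_k`, to `Eₙ(wₙ) ∘ Eₙ₋₁(wₙ₋₁) ∘ ⋯ ∘ E₂(w₂)`, is a bijection onto the symmetric group `S_n`.
(Here the index `i : Fin (n-1)` corresponds to `k = i + 2`.) -/
theorem shuffle_tuples_bijective_symmetric_group (n : ℕ) :
    Function.Bijective
      (fun ws : (∀ i : Fin (n - 1), {w : Equiv.Perm (Fin (i.1 + 1 + 1)) //
          IsShuffle (i.1 + 1) 1 w}) =>
        ((List.ofFn (fun i : Fin (n - 1) =>
          extendPerm n (i.1 + 2) (by have := i.isLt; omega) (ws i).1)).reverse.prod :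
            Equiv.Perm (Fin n))) := by
  rcases n with _ | m
  · have : IsEmpty (Fin (0 - 1)) := inferInstanceAs (IsEmpty (Fin 0))
    exact Function.bijective_of_unique_of_subsingleton _
  · exact bijective_extendedProd m
end

section
/- There exists exactly one ℚ-bilinear map m : V → V → V (where V is the free ℚ-module on planar binary trees) such that: (i) m(δ_t, δ_nil) = δ_t and m(δ_nil, δ_t) = δ_t for every planar binary tree t; and (ii) for all planar binary trees t₁, t₂, t₁', t₂', writing t = node () t₁ t₂ and t' = node () t₁' t₂', one has m(δ_t, δ_{t'}) = L_{t₁}(m(δ_{t₂}, δ_{t'})) + R_{t₂'}(m(δ_t, δ_{t₁'})). -/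
/-- The free ℚ-module on planar binary trees. -/
abbrev V : Type := Tree Unit →₀ ℚ

/-- The basis vector of `V` corresponding to the planar binary tree `t`. -/
noncomputable def δ (t : Tree Unit) : V := Finsupp.single t 1

/-- `L_u`: the linear map determined on basis vectors by `δ s ↦ δ (node () u s)`. -/
noncomputable def Ltree (u : Tree Unit) : V →ₗ[ℚ] V :=
  Finsupp.lmapDomain ℚ ℚ (fun s => Tree.node () u s)

/-- `R_u`: the linear map determined on basis vectors by `δ s ↦ δ (node () s u)`. -/
noncomputable def Rtree (u : Tree Unit) : V →ₗ[ℚ] V :=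
  Finsupp.lmapDomain ℚ ℚ (fun s => Tree.node () s u)

/-- A bilinear map `m` on `V` is a Loday–Ronco product if `δ nil` is a two-sided unit and `m`
satisfies the identity `t ∗ t' = t₁ ∨ (t₂ ∗ t') + (t ∗ t₁') ∨ t₂'` on basis vectors. -/
def IsLodayRoncoProduct (m : V →ₗ[ℚ] V →ₗ[ℚ] V) : Prop :=
  (∀ t : Tree Unit, m (δ t) (δ Tree.nil) = δ t ∧ m (δ Tree.nil) (δ t) = δ t) ∧
  (∀ t₁ t₂ t₁' t₂' : Tree Unit,
    m (δ (Tree.node () t₁ t₂)) (δ (Tree.node () t₁' t₂')) =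
      Ltree t₁ (m (δ t₂) (δ (Tree.node () t₁' t₂'))) +
      Rtree t₂' (m (δ (Tree.node () t₁ t₂)) (δ t₁')))

set_option linter.deprecated false

/-! Both recursive calls of (ii) lower the total number of internal nodes, so (i) and (ii) read
as a recursive definition of the product on pairs of trees; a Loday–Ronco product must be its
bilinear extension, by the same recursion. -/

noncomputable def lodayRoncoTreeMul : Tree Unit → Tree Unit → V
  | .nil, t' => δ t'
  | .node () t₁ t₂, .nil => δ (.node () t₁ t₂)
  | .node () t₁ t₂, .node () t₁' t₂' =>
      Ltree t₁ (lodayRoncoTreeMul t₂ (.node () t₁' t₂')) +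
      Rtree t₂' (lodayRoncoTreeMul (.node () t₁ t₂) t₁')
termination_by t t' => t.numNodes + t'.numNodes
decreasing_by all_goals simp [Tree.numNodes]

lemma lodayRoncoTreeMul_nil_right (t : Tree Unit) : lodayRoncoTreeMul t .nil = δ t := by
  rcases t with _ | ⟨⟨⟩, t₁, t₂⟩ <;> rw [lodayRoncoTreeMul]

noncomputable def lodayRoncoMul : V →ₗ[ℚ] V →ₗ[ℚ] V :=
  Finsupp.linearCombination ℚ fun t => Finsupp.linearCombination ℚ (lodayRoncoTreeMul t)

@[simp]
lemma lodayRoncoMul_δ_δ (t t' : Tree Unit) :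
    lodayRoncoMul (δ t) (δ t') = lodayRoncoTreeMul t t' := by
  simp [lodayRoncoMul, δ]

lemma isLodayRoncoProduct_lodayRoncoMul : IsLodayRoncoProduct lodayRoncoMul := by
  refine ⟨fun t => ⟨?_, ?_⟩, fun t₁ t₂ t₁' t₂' => ?_⟩
  · rw [lodayRoncoMul_δ_δ, lodayRoncoTreeMul_nil_right]
  · rw [lodayRoncoMul_δ_δ, lodayRoncoTreeMul]
  · simp only [lodayRoncoMul_δ_δ]
    rw [lodayRoncoTreeMul]

namespace IsLodayRoncoProduct

variable {m : V →ₗ[ℚ] V →ₗ[ℚ] V}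

theorem apply_δ_δ (hm : IsLodayRoncoProduct m) :
    ∀ t t' : Tree Unit, m (δ t) (δ t') = lodayRoncoTreeMul t t'
  | .nil, t' => by rw [(hm.1 t').2, lodayRoncoTreeMul]
  | .node () t₁ t₂, .nil => by rw [(hm.1 _).1, lodayRoncoTreeMul]
  | .node () t₁ t₂, .node () t₁' t₂' => by
      rw [hm.2, apply_δ_δ hm t₂, apply_δ_δ hm _ t₁', lodayRoncoTreeMul]
termination_by t t' => t.numNodes + t'.numNodes
decreasing_by all_goals simp [Tree.numNodes]

theorem eq_lodayRoncoMul (hm : IsLodayRoncoProduct m) : m = lodayRoncoMul :=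
  LinearMap.ext_basis Finsupp.basisSingleOne Finsupp.basisSingleOne fun t t' => by
    rw [Finsupp.coe_basisSingleOne]
    exact (hm.apply_δ_δ t t').trans (lodayRoncoMul_δ_δ t t').symm

end IsLodayRoncoProduct

/-- There is exactly one Loday–Ronco product on `V`. -/
theorem existsUnique_lodayRoncoProduct :
    ∃! m : V →ₗ[ℚ] V →ₗ[ℚ] V, IsLodayRoncoProduct m :=
  ⟨lodayRoncoMul, isLodayRoncoProduct_lodayRoncoMul, fun _ hm => hm.eq_lodayRoncoMul⟩
end

section
/- Any Loday–Ronco product m on the free ℚ-module V on planar binary trees is associative: for all x, y, z ∈ V, m(m(x, y), z) = m(x, m(y, z)). -/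
/-! Writing `δ (node t₁ t₂)` as `graft (δ t₁) (δ t₂)` with `graft` bilinear, the defining
recursion extends to arbitrary vectors:
`m (graft a b) (graft c d) = graft a (m b (graft c d)) + graft (m (graft a b) c) d`.
Expanding `(xy)z` and `x(yz)` with this rule for `x = graft a b`, `y = graft c d`,
`z = graft e f`, both contain `graft (m x c) (m d z)` and the others match by associativity on triples with fewer
nodes in total, so associativity on basis vectors follows by induction on the node count. -/

set_option linter.deprecated false

noncomputable def graft : V →ₗ[ℚ] V →ₗ[ℚ] V :=
  Finsupp.linearCombination ℚ Ltree

lemma single_eq_smul_δ (t : Tree Unit) (r : ℚ) : Finsupp.single t r = r • δ t := by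
  simp [δ]

lemma graft_δ (a : Tree Unit) : graft (δ a) = Ltree a := by
  simp [graft, δ]

lemma Ltree_δ (a b : Tree Unit) : Ltree a (δ b) = δ (Tree.node () a b) := by
  simp [Ltree, δ]

lemma graft_δ_δ (a b : Tree Unit) : graft (δ a) (δ b) = δ (Tree.node () a b) := by
  rw [graft_δ, Ltree_δ]

lemma Rtree_apply (b : Tree Unit) (x : V) : Rtree b x = graft x (δ b) := by
  have : Rtree b = graft.flip (δ b) := by
    ext a : 2
    simpa [Rtree, δ] using (graft_δ_δ a b).symm
  exact LinearMap.congr_fun this x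

namespace IsLodayRoncoProduct

variable {m : V →ₗ[ℚ] V →ₗ[ℚ] V} (hm : IsLodayRoncoProduct m)
include hm

lemma apply_δ_nil_right (x : V) : m x (δ Tree.nil) = x := by
  have : m.flip (δ Tree.nil) = LinearMap.id := by
    ext t : 2
    exact (hm.1 t).1
  exact LinearMap.congr_fun this x

lemma apply_δ_nil_left (x : V) : m (δ Tree.nil) x = x := by
  have : m (δ Tree.nil) = LinearMap.id := by
    ext t : 2
    exact (hm.1 t).2
  exact LinearMap.congr_fun this x

lemma apply_graft_graft_δ (a b c d : Tree Unit) :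
    m (graft (δ a) (δ b)) (graft (δ c) (δ d)) =
      graft (δ a) (m (δ b) (graft (δ c) (δ d))) +
        graft (m (graft (δ a) (δ b)) (δ c)) (δ d) := by
  rw [graft_δ_δ a b, graft_δ_δ c d, hm.2 a b c d, graft_δ, Rtree_apply]

lemma apply_graft_graft (a b c d : V) :
    m (graft a b) (graft c d) = graft a (m b (graft c d)) + graft (m (graft a b) c) d := by
  induction d using Finsupp.induction_linear with
  | zero => simp
  | add u v hu hv => simp only [map_add, hu, hv]; abel
  | single d r =>
  induction c using Finsupp.induction_linear with
  | zero => simp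
  | add u v hu hv => simp only [map_add, LinearMap.add_apply, hu, hv]; abel
  | single c q =>
  induction b using Finsupp.induction_linear with
  | zero => simp
  | add u v hu hv => simp only [map_add, LinearMap.add_apply, hu, hv]; abel
  | single b p =>
  induction a using Finsupp.induction_linear with
  | zero => simp
  | add u v hu hv => simp only [map_add, LinearMap.add_apply, hu, hv]; abel
  | single a o =>
    simp only [single_eq_smul_δ, map_smul, LinearMap.smul_apply, smul_add, hm.apply_graft_graft_δ]

lemma graft_assoc_left_expand (a b c d e f : V) :
    m (m (graft a b) (graft c d)) (graft e f) =
      graft a (m (m b (graft c d)) (graft e f)) + graft (m (graft a b) c) (m d (graft e f)) +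
        graft (m (m (graft a b) (graft c d)) e) f := by
  conv_lhs => rw [hm.apply_graft_graft a b c d]
  conv_rhs => rw [hm.apply_graft_graft a b c d]
  simp only [map_add, LinearMap.add_apply, hm.apply_graft_graft a _ e f,
    hm.apply_graft_graft _ d e f]
  abel

lemma graft_assoc_right_expand (a b c d e f : V) :
    m (graft a b) (m (graft c d) (graft e f)) =
      graft a (m b (m (graft c d) (graft e f))) + graft (m (graft a b) c) (m d (graft e f)) +
        graft (m (graft a b) (m (graft c d) e)) f := by
  conv_lhs => rw [hm.apply_graft_graft c d e f]
  conv_rhs => rw [hm.apply_graft_graft c d e f]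
  simp only [map_add, hm.apply_graft_graft a b c _, hm.apply_graft_graft a b _ f]
  abel

lemma graft_assoc_of_assoc (a b c d e f : V)
    (hb : m (m b (graft c d)) (graft e f) = m b (m (graft c d) (graft e f)))
    (he : m (m (graft a b) (graft c d)) e = m (graft a b) (m (graft c d) e)) :
    m (m (graft a b) (graft c d)) (graft e f) = m (graft a b) (m (graft c d) (graft e f)) := by
  rw [hm.graft_assoc_left_expand, hm.graft_assoc_right_expand, hb, he]

theorem assoc_δ : ∀ t s u : Tree Unit, m (m (δ t) (δ s)) (δ u) = m (δ t) (m (δ s) (δ u))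
  | .nil, s, u => by rw [hm.apply_δ_nil_left, hm.apply_δ_nil_left]
  | t, .nil, u => by rw [hm.apply_δ_nil_right, hm.apply_δ_nil_left]
  | t, s, .nil => by rw [hm.apply_δ_nil_right, hm.apply_δ_nil_right]
  | .node () t₁ t₂, .node () s₁ s₂, .node () u₁ u₂ => by
    have ht₂ := assoc_δ t₂ (.node () s₁ s₂) (.node () u₁ u₂)
    have hu₁ := assoc_δ (.node () t₁ t₂) (.node () s₁ s₂) u₁
    simp only [← graft_δ_δ] at ht₂ hu₁ ⊢
    exact hm.graft_assoc_of_assoc _ _ _ _ _ _ ht₂ hu₁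
termination_by t s u => t.numNodes + s.numNodes + u.numNodes
decreasing_by all_goals simp only [Tree.numNodes, BinaryTree.numNodes]; omega

end IsLodayRoncoProduct

/-- Any Loday–Ronco product is associative. -/
theorem lodayRoncoProduct_assoc (m : V →ₗ[ℚ] V →ₗ[ℚ] V) (hm : IsLodayRoncoProduct m)
    (x y z : V) : m (m x y) z = m x (m y z) := by
  have : m.compr₂ m = ((LinearMap.llcomp ℚ V V V).comp m).compl₂ m := by
    ext t s u : 6
    exact hm.assoc_δ t s u
  exact congr($this x y z)
end

section
/- Let m be a Loday–Ronco product on the free ℚ-module V on planar binary trees, and let 𝟙 = δ_{node () nil nil} be the basis vector of the unique tree with one internal node. For every n ≥ 1, the support of the n-fold product m(⋯ m(m(𝟙, 𝟙), 𝟙) ⋯, 𝟙) (with n factors 𝟙) is exactly the set of planar binary trees with n internal nodes, and the coefficient of every such tree is a positive integer. -/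
/-- The `n`-fold product `m(⋯ m(m(𝟙, 𝟙), 𝟙) ⋯, 𝟙)` with `n` factors
`𝟙 = δ (node () nil nil)` (and the value `δ nil` for `n = 0`). -/
noncomputable def nfoldOne (m : V →ₗ[ℚ] V →ₗ[ℚ] V) : ℕ → V
  | 0 => δ Tree.nil
  | 1 => δ (Tree.node () Tree.nil Tree.nil)
  | n + 2 => m (nfoldOne m (n + 1)) (δ (Tree.node () Tree.nil Tree.nil))


/-! Multiplying a tree `t` on the right by `𝟙` gives, by the Loday–Ronco recursion, the sum of the
trees obtained from `t` by inserting one new node, with empty right subtree, somewhere on the right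
spine of `t`. Every tree with `n + 1` nodes arises in this way from at least one tree with `n` nodes
(delete the lowest node of its right spine), and only such trees arise. Hence, by induction on `n`,
the `n`-fold product is a combination of exactly the trees with `n` nodes, with positive integer
coefficients. -/

open BinaryTree Finset

def rightSpineInsertions : BinaryTree Unit → Finset (BinaryTree Unit)
  | nil => {nil △ nil}
  | node _ t₁ t₂ => insert (node () t₁ t₂ △ nil) ((rightSpineInsertions t₂).image (t₁ △ ·))

theorem numNodes_of_mem_rightSpineInsertions {t u : BinaryTree Unit}
    (hu : u ∈ rightSpineInsertions t) : u.numNodes = t.numNodes + 1 := by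
  induction t generalizing u with
  | nil => simp_all [rightSpineInsertions, numNodes]
  | node _ t₁ t₂ _ ih₂ =>
    simp only [rightSpineInsertions, mem_insert, mem_image] at hu
    rcases hu with rfl | ⟨w, hw, rfl⟩
    · simp [numNodes]
    · simp only [numNodes, ih₂ hw]; omega

theorem exists_node_mem_rightSpineInsertions (u₁ u₂ : BinaryTree Unit) :
    ∃ t, t.numNodes = u₁.numNodes + u₂.numNodes ∧ u₁ △ u₂ ∈ rightSpineInsertions t := by
  induction u₂ generalizing u₁ with
  | nil =>
    refine ⟨u₁, by simp [numNodes], ?_⟩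
    cases u₁ <;> simp [rightSpineInsertions]
  | node _ v₁ v₂ _ ih₂ =>
    obtain ⟨w, hw, hmem⟩ := ih₂ v₁
    exact ⟨u₁ △ w, by simp only [numNodes, hw]; omega,
      mem_insert_of_mem (mem_image_of_mem _ hmem)⟩

theorem biUnion_rightSpineInsertions_treesOfNumNodesEq (n : ℕ) :
    (treesOfNumNodesEq n).biUnion rightSpineInsertions = treesOfNumNodesEq (n + 1) := by
  ext u
  simp only [mem_biUnion, mem_treesOfNumNodesEq]
  constructor
  · rintro ⟨t, rfl, hu⟩
    exact numNodes_of_mem_rightSpineInsertions hu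
  · intro hu
    cases u with
    | nil => simp [numNodes] at hu
    | node _ u₁ u₂ =>
      obtain ⟨t, ht, hmem⟩ := exists_node_mem_rightSpineInsertions u₁ u₂
      exact ⟨t, by simp only [numNodes] at hu; omega, hmem⟩

theorem Ltree_δ_s9 (u s : BinaryTree Unit) : Ltree u (δ s) = δ (u △ s) :=
  Finsupp.mapDomain_single

theorem Rtree_δ (u s : BinaryTree Unit) : Rtree u (δ s) = δ (s △ u) :=
  Finsupp.mapDomain_single

namespace IsLodayRoncoProduct

variable {m : V →ₗ[ℚ] V →ₗ[ℚ] V}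

theorem δ_mul_one (hm : IsLodayRoncoProduct m) (t : BinaryTree Unit) :
    m (δ t) (δ (nil △ nil)) = ∑ u ∈ rightSpineInsertions t, δ u := by
  induction t with
  | nil => simpa [rightSpineInsertions] using (hm.1 (nil △ nil)).2
  | node _ t₁ t₂ _ ih₂ =>
    have hnotMem : node () t₁ t₂ △ nil ∉ (rightSpineInsertions t₂).image (t₁ △ ·) := by
      simp only [mem_image, node.injEq, not_exists, not_and]
      rintro u hu - - rfl
      simpa [numNodes] using numNodes_of_mem_rightSpineInsertions hu
    rw [hm.2 t₁ t₂ nil nil, (hm.1 _).1, ih₂, rightSpineInsertions, sum_insert hnotMem,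
      sum_image (fun _ _ _ _ h => by simpa using h), map_sum, Rtree_δ, add_comm]
    simp only [Ltree_δ_s9]

theorem nfoldOne_succ (hm : IsLodayRoncoProduct m) (n : ℕ) :
    nfoldOne m (n + 1) = m (nfoldOne m n) (δ (nil △ nil)) := by
  cases n with
  | zero => exact ((hm.1 _).2).symm
  | succ n => rfl

end IsLodayRoncoProduct

def IsPosNatCombination (v : V) (S : Finset (BinaryTree Unit)) : Prop :=
  ∃ c : BinaryTree Unit → ℕ, (∀ t ∈ S, 0 < c t) ∧ v = ∑ t ∈ S, (c t : ℚ) • δ t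

theorem sum_smul_δ_apply (S : Finset (BinaryTree Unit)) (c : BinaryTree Unit → ℚ)
    (u : BinaryTree Unit) : (∑ t ∈ S, c t • δ t) u = if u ∈ S then c u else 0 := by
  simp [δ, Finsupp.finset_sum_apply, Finsupp.single_apply]

theorem isPosNatCombination_δ (t : BinaryTree Unit) : IsPosNatCombination (δ t) {t} :=
  ⟨fun _ => 1, by simp, by simp⟩

namespace IsPosNatCombination

variable {v : V} {S : Finset (BinaryTree Unit)}

theorem support_eq (h : IsPosNatCombination v S) : v.support = S := by
  obtain ⟨c, hc, rfl⟩ := h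
  ext u
  by_cases hu : u ∈ S
  · simp [sum_smul_δ_apply, hu, (hc u hu).ne']
  · simp [sum_smul_δ_apply, hu]

theorem exists_apply_eq (h : IsPosNatCombination v S) {t : BinaryTree Unit} (ht : t ∈ S) :
    ∃ c : ℕ, 0 < c ∧ v t = c := by
  obtain ⟨c, hc, rfl⟩ := h
  exact ⟨c t, hc t ht, by simp [sum_smul_δ_apply, ht]⟩

theorem map {g : V →ₗ[ℚ] V} {f : BinaryTree Unit → Finset (BinaryTree Unit)}
    (hg : ∀ t, g (δ t) = ∑ u ∈ f t, δ u) (h : IsPosNatCombination v S) :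
    IsPosNatCombination (g v) (S.biUnion f) := by
  obtain ⟨c, hc, rfl⟩ := h
  refine ⟨fun u => ∑ t ∈ S with u ∈ f t, c t, fun u hu => ?_, ?_⟩
  · obtain ⟨t, ht, hut⟩ := mem_biUnion.mp hu
    exact sum_pos (fun t ht => hc t (mem_filter.mp ht).1) ⟨t, mem_filter.mpr ⟨ht, hut⟩⟩
  · simp only [map_sum, map_smul, hg, smul_sum, Nat.cast_sum, sum_smul]
    exact sum_comm' fun t u =>
      ⟨fun ⟨ht, hu⟩ => ⟨mem_filter.mpr ⟨ht, hu⟩, mem_biUnion.mpr ⟨t, ht, hu⟩⟩,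
        fun ⟨htu, _⟩ => mem_filter.mp htu⟩

end IsPosNatCombination

theorem nfoldOne_support_eq_and_coeff_pos_general (m : V →ₗ[ℚ] V →ₗ[ℚ] V)
    (hm : IsLodayRoncoProduct m) (n : ℕ) :
    (nfoldOne m n).support = Tree.treesOfNumNodesEq n ∧
    ∀ t ∈ Tree.treesOfNumNodesEq n, ∃ c : ℕ, 0 < c ∧ nfoldOne m n t = (c : ℚ) := by
  have h : IsPosNatCombination (nfoldOne m n) (treesOfNumNodesEq n) := by
    induction n with
    | zero => rw [treesOfNumNodesEq_zero]; exact isPosNatCombination_δ nil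
    | succ n ih =>
      rw [hm.nfoldOne_succ, ← biUnion_rightSpineInsertions_treesOfNumNodesEq]
      exact ih.map (g := m.flip (δ (nil △ nil))) hm.δ_mul_one
  exact ⟨h.support_eq, fun t => h.exists_apply_eq⟩

/-- The support of the `n`-fold product `𝟙 ∗ ⋯ ∗ 𝟙` is exactly the set of planar binary
trees with `n` internal nodes, and every coefficient is a positive integer. -/
theorem nfoldOne_support_eq_and_coeff_pos (m : V →ₗ[ℚ] V →ₗ[ℚ] V)
    (hm : IsLodayRoncoProduct m) (n : ℕ) (hn : 1 ≤ n) :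
    (nfoldOne m n).support = Tree.treesOfNumNodesEq n ∧
    ∀ t ∈ Tree.treesOfNumNodesEq n, ∃ c : ℕ, 0 < c ∧ nfoldOne m n t = (c : ℚ) :=
  nfoldOne_support_eq_and_coeff_pos_general m hm n
end
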